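/- Proposition 1, second case. Let M ≥ 2, N ≥ 1 and let μ, ν be integers with 1 ≤ μ < ν ≤ M. Write Q = Π_{j=μ}^{ν−2} (q w_{j+1} − w_j')(w_{j+1}' − q w_j). Then, with respect to the pairs (w_μ, w_μ'), …, (w_{ν−1}, w_{ν−1}'), all carrying the bosonic exchange factor H^b, and with w_{μ−1}, w_ν further free variables, the weak equality (q w_μ − w_{μ−1}) · Q · (q w_ν − w_{ν−1}') ∼ (w_μ' − q w_{μ−1}) · Q · (w_ν − q w_{ν−1}) holds. -/

import Mathlib

/-- Bosonic exchange factor `H^b(u,v) = -(q²v - u)/(q²u - v)`. -/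
noncomputable def Hb (q u v : ℂ) : ℂ := -(q ^ 2 * v - u) / (q ^ 2 * u - v)

/-- Fermionic exchange factor `H^f(u,v) = -(q²u - v)/(q²v - u)`. -/
noncomputable def Hf (q u v : ℂ) : ℂ := -(q ^ 2 * u - v) / (q ^ 2 * v - u)

/-- Exchange factor assignment for `U_q(sl^(M|N))`: bosonic for `j < M`,
the constant `-1` for `j = M`, fermionic for `j > M`. -/
noncomputable def Hex (M : ℕ) (q : ℂ) (j : ℕ) : ℂ → ℂ → ℂ :=
  if j < M then Hb q else if j = M then fun _ _ => -1 else Hf q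

/-- Interchange `w_j` and `w_j'` for every `j ∈ σ`. -/
def swapOn (σ : Finset ℕ) (w w' : ℕ → ℂ) : ℕ → ℂ := fun j => if j ∈ σ then w' j else w j

/-- Weak equality `F ∼ G` with respect to the pairs `(w_j, w_j')`, `j ∈ J`,
carrying exchange factors `H j`. -/
def WeakEq (J : Finset ℕ) (H : ℕ → ℂ → ℂ → ℂ) (w w' : ℕ → ℂ)
    (F G : (ℕ → ℂ) → (ℕ → ℂ) → ℂ) : Prop :=
  ∑ σ ∈ J.powerset, (∏ j ∈ σ, H j (w' j) (w j)) * F (swapOn σ w w') (swapOn σ w' w)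
    = ∑ σ ∈ J.powerset, (∏ j ∈ σ, H j (w' j) (w j)) * G (swapOn σ w w') (swapOn σ w' w)

/-- `Q = Π_{j=μ}^{ν−2} (q w_{j+1} − w_j')(w_{j+1}' − q w_j)`. -/
noncomputable def Qbos (q : ℂ) (μ ν : ℕ) (u u' : ℕ → ℂ) : ℂ :=
  ∏ j ∈ Finset.Ico μ (ν - 1), (q * u (j + 1) - u' j) * (u' (j + 1) - q * u j)

/-!
Multiplied by `q`, the difference of the two sides becomes `L + R`, where `L` is the chain `Q`
with the pole factor `q²w_μ − w_μ'` in front and `R` the chain with `q²w_{ν−1} − w_{ν−1}'` behind.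
Since `H^b(w', w) (q²w' − w) = −(q²w − w')`, symmetrizing over the pair at a pole replaces the
rest of the expression by its antisymmetrization in that pair; for the adjacent link of `Q` this
is `−(w − w')` times a pole at the next pair. Peeling the pairs off one at a time, `L`
symmetrizes to `(−1)^(ν−μ−1) ∏ (q²w_j − w_j')(w_j − w_j')` and `R` to its negative.
-/

open Finset Function

section WeakSum

variable (J : Finset ℕ) (H : ℕ → ℂ → ℂ → ℂ) (w w' : ℕ → ℂ)

def weakSum (F : (ℕ → ℂ) → (ℕ → ℂ) → ℂ) : ℂ :=
  ∑ σ ∈ J.powerset, (∏ j ∈ σ, H j (w' j) (w j)) * F (swapOn σ w w') (swapOn σ w' w)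

variable {J H w w'}

theorem weakEq_iff_weakSum_eq {F G : (ℕ → ℂ) → (ℕ → ℂ) → ℂ} :
    WeakEq J H w w' F G ↔ weakSum J H w w' F = weakSum J H w w' G :=
  Iff.rfl

theorem weakSum_add (F G : (ℕ → ℂ) → (ℕ → ℂ) → ℂ) :
    weakSum J H w w' (fun u u' => F u u' + G u u') =
      weakSum J H w w' F + weakSum J H w w' G := by
  simp only [weakSum, mul_add, sum_add_distrib]

theorem weakSum_sub (F G : (ℕ → ℂ) → (ℕ → ℂ) → ℂ) :
    weakSum J H w w' (fun u u' => F u u' - G u u') =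
      weakSum J H w w' F - weakSum J H w w' G := by
  simp only [weakSum, mul_sub, sum_sub_distrib]

theorem weakSum_const_mul (c : ℂ) (F : (ℕ → ℂ) → (ℕ → ℂ) → ℂ) :
    weakSum J H w w' (fun u u' => c * F u u') = c * weakSum J H w w' F := by
  simp only [weakSum, mul_sum, mul_left_comm]

theorem weakSum_congr {F G : (ℕ → ℂ) → (ℕ → ℂ) → ℂ}
    (h : ∀ u u', (∀ j ∉ J, u j = w j ∧ u' j = w' j) → F u u' = G u u') :
    weakSum J H w w' F = weakSum J H w w' G := by
  refine sum_congr rfl fun σ hσ => congrArg _ (h _ _ fun j hj => ?_)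
  have hjσ : j ∉ σ := fun h => hj (mem_powerset.1 hσ h)
  simp [swapOn, hjσ]

theorem weakSum_empty (F : (ℕ → ℂ) → (ℕ → ℂ) → ℂ) : weakSum ∅ H w w' F = F w w' := by
  simp only [weakSum, powerset_empty, sum_singleton, prod_empty, one_mul]
  rfl

theorem swapOn_insert (σ : Finset ℕ) (m : ℕ) :
    swapOn (insert m σ) w w' = update (swapOn σ w w') m (w' m) := by
  ext j
  by_cases hj : j = m <;> simp [swapOn, hj]

theorem weakSum_insert {m : ℕ} (hm : m ∉ J) (F : (ℕ → ℂ) → (ℕ → ℂ) → ℂ) :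
    weakSum (insert m J) H w w' F = weakSum J H w w' fun u u' =>
      F u u' + H m (w' m) (w m) * F (update u m (w' m)) (update u' m (w m)) := by
  rw [weakSum, sum_powerset_insert hm, ← sum_add_distrib]
  refine sum_congr rfl fun σ hσ => ?_
  have hmσ : m ∉ σ := fun h => hm (mem_powerset.1 hσ h)
  rw [prod_insert hmσ, swapOn_insert, swapOn_insert]
  ring

theorem weakSum_insert_bosonic_pole {q : ℂ} {m : ℕ} (hm : m ∉ J) (hden : q ^ 2 * w' m ≠ w m)
    (G : (ℕ → ℂ) → (ℕ → ℂ) → ℂ) :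
    weakSum (insert m J) (fun _ => Hb q) w w' (fun u u' => (q ^ 2 * u m - u' m) * G u u') =
      (q ^ 2 * w m - w' m) * weakSum J (fun _ => Hb q) w w' fun u u' =>
        G u u' - G (update u m (w' m)) (update u' m (w m)) := by
  have hHb : Hb q (w' m) (w m) * (q ^ 2 * w' m - w m) = -(q ^ 2 * w m - w' m) := by
    rw [Hb, div_mul_cancel₀ _ (sub_ne_zero.2 hden)]
  rw [weakSum_insert hm, ← weakSum_const_mul]
  refine weakSum_congr fun u u' hu => ?_
  obtain ⟨hum, hu'm⟩ := hu m hm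
  simp only [update_self, hum, hu'm]
  linear_combination G (update u m (w' m)) (update u' m (w m)) * hHb

end WeakSum

section BosonicChain

variable (q : ℂ)

def bosLink (u u' : ℕ → ℂ) (j : ℕ) : ℂ := (q * u (j + 1) - u' j) * (u' (j + 1) - q * u j)

theorem qbos_eq_prod_bosLink (μ n : ℕ) (u u' : ℕ → ℂ) :
    Qbos q μ (μ + n + 1) u u' = ∏ i ∈ range n, bosLink q u u' (μ + i) := by
  rw [Qbos, prod_Ico_eq_prod_range, show μ + n + 1 - 1 - μ = n by omega]
  rfl

theorem bosLink_update_left (u u' : ℕ → ℂ) (j : ℕ) (x y : ℂ) :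
    bosLink q (update u j x) (update u' j y) j = (q * u (j + 1) - y) * (u' (j + 1) - q * x) := by
  simp [bosLink]

theorem bosLink_update_right (u u' : ℕ → ℂ) (j : ℕ) (x y : ℂ) :
    bosLink q (update u (j + 1) x) (update u' (j + 1) y) j = (q * x - u' j) * (y - q * u j) := by
  simp [bosLink]

def leftTail (m n : ℕ) (u u' : ℕ → ℂ) : ℂ :=
  (∏ i ∈ range n, bosLink q u u' (m + i)) * (q * u (m + n + 1) - u' (m + n))

def rightHead (m n : ℕ) (u u' : ℕ → ℂ) : ℂ :=
  (u' m - q * u (m - 1)) * ∏ i ∈ range n, bosLink q u u' (m + i)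

theorem leftTail_succ (m n : ℕ) (u u' : ℕ → ℂ) :
    leftTail q m (n + 1) u u' = bosLink q u u' m * leftTail q (m + 1) n u u' := by
  simp only [leftTail, prod_range_succ', add_zero, mul_assoc]
  ring_nf

theorem rightHead_succ (m n : ℕ) (u u' : ℕ → ℂ) :
    rightHead q m (n + 1) u u' = rightHead q m n u u' * bosLink q u u' (m + n) := by
  simp only [rightHead, prod_range_succ, mul_assoc]

theorem leftTail_update (m n : ℕ) (u u' : ℕ → ℂ) (x y : ℂ) :
    leftTail q (m + 1) n (update u m x) (update u' m y) = leftTail q (m + 1) n u u' := by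
  simp (disch := omega) only [leftTail, bosLink, update_of_ne]

theorem rightHead_update (m n : ℕ) (u u' : ℕ → ℂ) (x y : ℂ) :
    rightHead q m n (update u (m + n + 1) x) (update u' (m + n + 1) y) = rightHead q m n u u' := by
  simp only [rightHead, bosLink]
  congr 1
  · simp (disch := omega) only [update_of_ne]
  · refine prod_congr rfl fun i hi => ?_
    have hin := mem_range.1 hi
    simp (disch := omega) only [update_of_ne]

theorem mul_sub_eq_pole_mul_leftTail_add_pole_mul_rightHead (μ n : ℕ) (u u' : ℕ → ℂ) :
    q * ((q * u μ - u (μ - 1)) * Qbos q μ (μ + n + 1) u u' *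
          (q * u (μ + n + 1) - u' (μ + n + 1 - 1)) -
        (u' μ - q * u (μ - 1)) * Qbos q μ (μ + n + 1) u u' *
          (u (μ + n + 1) - q * u (μ + n + 1 - 1))) =
      (q ^ 2 * u μ - u' μ) * leftTail q μ n u u' +
        (q ^ 2 * u (μ + n) - u' (μ + n)) * rightHead q μ n u u' := by
  rw [qbos_eq_prod_bosLink, leftTail, rightHead, Nat.add_sub_cancel]
  ring

variable {q} {w w' : ℕ → ℂ}

theorem weakSum_pole_mul_leftTail (m n : ℕ)
    (hden : ∀ j ∈ Ico m (m + n + 1), q ^ 2 * w' j ≠ w j) :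
    weakSum (Ico m (m + n + 1)) (fun _ => Hb q) w w'
        (fun u u' => (q ^ 2 * u m - u' m) * leftTail q m n u u') =
      (-1) ^ n * ∏ j ∈ Ico m (m + n + 1), (q ^ 2 * w j - w' j) * (w j - w' j) := by
  induction n generalizing m with
  | zero =>
    have hIco : Ico m (m + 0 + 1) = insert m ∅ := by simp
    rw [hIco, weakSum_insert_bosonic_pole (notMem_empty m) (hden m (by simp)), weakSum_empty]
    simp [leftTail]
  | succ n ih =>
    have hIco : Ico m (m + (n + 1) + 1) = insert m (Ico (m + 1) (m + 1 + n + 1)) := by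
      rw [show m + 1 + n + 1 = m + (n + 1) + 1 by omega]
      exact (insert_Ico_add_one_left_eq_Ico (by omega)).symm
    rw [hIco, weakSum_insert_bosonic_pole (by simp) (hden m (by simp)),
      weakSum_congr (G := fun u u' => -(w m - w' m) *
        ((q ^ 2 * u (m + 1) - u' (m + 1)) * leftTail q (m + 1) n u u')),
      weakSum_const_mul, ih, prod_insert (by simp)]
    · ring
    · exact fun j hj => hden j (by simp only [mem_Ico] at hj ⊢; omega)
    · intro u u' hu
      obtain ⟨hum, hu'm⟩ := hu m (by simp)
      rw [leftTail_succ, leftTail_succ, leftTail_update, bosLink_update_left, bosLink, hum, hu'm]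
      ring

theorem weakSum_pole_mul_rightHead {m : ℕ} (hm : 1 ≤ m) (n : ℕ)
    (hden : ∀ j ∈ Ico m (m + n + 1), q ^ 2 * w' j ≠ w j) :
    weakSum (Ico m (m + n + 1)) (fun _ => Hb q) w w'
        (fun u u' => (q ^ 2 * u (m + n) - u' (m + n)) * rightHead q m n u u') =
      (-1) ^ (n + 1) * ∏ j ∈ Ico m (m + n + 1), (q ^ 2 * w j - w' j) * (w j - w' j) := by
  induction n with
  | zero =>
    have hIco : Ico m (m + 0 + 1) = insert m ∅ := by simp
    rw [hIco, add_zero, weakSum_insert_bosonic_pole (notMem_empty m) (hden m (by simp)),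
      weakSum_empty]
    simp [rightHead, update_of_ne (show m - 1 ≠ m by omega)]
    ring
  | succ n ih =>
    have hIco : Ico m (m + (n + 1) + 1) = insert (m + n + 1) (Ico m (m + n + 1)) := by
      rw [← add_assoc, Ico_add_one_right_eq_Icc, Icc_eq_cons_Ico (by omega), cons_eq_insert]
    rw [hIco, ← add_assoc,
      weakSum_insert_bosonic_pole (by simp) (hden (m + n + 1) (by simp; omega)),
      weakSum_congr (G := fun u u' => -(w (m + n + 1) - w' (m + n + 1)) *
        ((q ^ 2 * u (m + n) - u' (m + n)) * rightHead q m n u u')),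
      weakSum_const_mul, ih, prod_insert (by simp)]
    · ring
    · exact fun j hj => hden j (by simp only [mem_Ico] at hj ⊢; omega)
    · intro u u' hu
      obtain ⟨hum, hu'm⟩ := hu (m + n + 1) (by simp)
      rw [rightHead_succ, rightHead_succ, rightHead_update, bosLink_update_right, bosLink,
        hum, hu'm]
      ring

end BosonicChain

theorem proposition1_second_general
    (μ ν : ℕ) (hμ1 : 1 ≤ μ) (hμν : μ < ν)
    (q : ℂ) (hq : q ≠ 0) (w w' : ℕ → ℂ)
    (hden : ∀ j ∈ Finset.Ico μ ν, q ^ 2 * w' j ≠ w j) :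
    WeakEq (Finset.Ico μ ν) (fun _ => Hb q) w w'
      (fun u u' => (q * u μ - u (μ - 1)) * Qbos q μ ν u u' * (q * u ν - u' (ν - 1)))
      (fun u u' => (u' μ - q * u (μ - 1)) * Qbos q μ ν u u' * (u ν - q * u (ν - 1))) := by
  obtain ⟨n, rfl⟩ : ∃ n, ν = μ + n + 1 := ⟨ν - μ - 1, by omega⟩
  rw [weakEq_iff_weakSum_eq, ← sub_eq_zero, ← weakSum_sub, ← mul_right_inj' hq, mul_zero,
    ← weakSum_const_mul]
  simp only [mul_sub_eq_pole_mul_leftTail_add_pole_mul_rightHead]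
  rw [weakSum_add, weakSum_pole_mul_leftTail μ n hden, weakSum_pole_mul_rightHead hμ1 n hden]
  ring

/-- Proposition 1, second case: for `1 ≤ μ < ν ≤ M`,
`(q w_μ − w_{μ−1}) Q (q w_ν − w_{ν−1}') ∼ (w_μ' − q w_{μ−1}) Q (w_ν − q w_{ν−1})`
with respect to the bosonic pairs `(w_μ, w_μ'), …, (w_{ν−1}, w_{ν−1}')`. -/
theorem proposition1_second (M N : ℕ) (hM : 2 ≤ M) (hN : 1 ≤ N)
    (μ ν : ℕ) (hμ1 : 1 ≤ μ) (hμν : μ < ν) (hν : ν ≤ M)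
    (q : ℂ) (hq : q ≠ 0) (hq2 : q ^ 2 ≠ 1) (w w' : ℕ → ℂ)
    (hden : ∀ j ∈ Finset.Ico μ ν, q ^ 2 * w' j ≠ w j) :
    WeakEq (Finset.Ico μ ν) (fun _ => Hb q) w w'
      (fun u u' => (q * u μ - u (μ - 1)) * Qbos q μ ν u u' * (q * u ν - u' (ν - 1)))
      (fun u u' => (u' μ - q * u (μ - 1)) * Qbos q μ ν u u' * (u ν - q * u (ν - 1))) :=
  proposition1_second_general μ ν hμ1 hμν q hq w w' hden
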